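/- Let y* : ℝ^{d_x} → ℝ^{d_y} be L_y-Lipschitz and let μ > 0. Then every partial derivative of y_μ is Lipschitz with constant d_x L_y / μ: for each i ∈ {1,…,d_y}, j ∈ {1,…,d_x} and all x, z ∈ ℝ^{d_x}, |∂(y_μ)_i/∂x_j (x) − ∂(y_μ)_i/∂x_j (z)| ≤ (d_x L_y / μ) ‖x − z‖. -/

import Mathlib

open MeasureTheory Metric
open scoped InnerProductSpace RealInnerProductSpace NNReal

noncomputable section

/-- `ℝ^n` with the Euclidean norm. -/
abbrev E (n : ℕ) : Type := EuclideanSpace ℝ (Fin n)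

/-- Uniform (normalized Lebesgue) probability measure on the closed unit ball of `ℝ^n`. -/
def uniformBall (n : ℕ) : Measure (E n) :=
  (volume (closedBall (0 : E n) 1))⁻¹ • volume.restrict (closedBall (0 : E n) 1)

/-- Uniform (rotation-invariant) probability measure on the unit sphere of `ℝ^n`,
viewed as a measure on the ambient space. -/
def uniformSphere (n : ℕ) : Measure (E n) :=
  ((volume : Measure (E n)).toSphere Set.univ)⁻¹ •
    Measure.map Subtype.val ((volume : Measure (E n)).toSphere)

/-- Ball smoothing `y_μ` of a map `y : ℝ^{d_x} → ℝ^{d_y}`: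
`y_μ(x) = E_{u ~ U(B^{d_x})}[y(x + μ u)]`. -/
def ymu {dx dy : ℕ} (y : E dx → E dy) (μ : ℝ) (x : E dx) : E dy :=
  ∫ u, y (x + μ • u) ∂(uniformBall dx)

/-- Partial gradient `∇_x f` of `f : ℝ^{d_x} × ℝ^{d_y} → ℝ` in its first argument. -/
def gradx {dx dy : ℕ} (f : E dx × E dy → ℝ) (x : E dx) (y : E dy) : E dx :=
  gradient (fun x' => f (x', y)) x

/-- Partial gradient `∇_y f` of `f : ℝ^{d_x} × ℝ^{d_y} → ℝ` in its second argument. -/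
def grady {dx dy : ℕ} (f : E dx × E dy → ℝ) (x : E dx) (y : E dy) : E dy :=
  gradient (fun y' => f (x, y')) y

/-- Smoothed surrogate `F_μ(x) = f(x, y_μ(x))`. -/
def Fmu {dx dy : ℕ} (f : E dx × E dy → ℝ) (y : E dx → E dy) (μ : ℝ) (x : E dx) : ℝ :=
  f (x, ymu y μ x)

open Real Set Filter ENNReal

/-!
Write `ω n` for the volume of the unit ball of `ℝ^n`. By Rademacher's theorem `y*` is
differentiable almost everywhere, so one may differentiate under the integral:
`∂_j (y_μ)_i (x)` is the average of `g = ∂_j y*_i` over the ball of radius `μ` around `x`, and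
`|g| ≤ L_y`. Moving `x` by `c` along a coordinate axis moves the unit ball of the averaging
variable by `c / μ`; by Fubini the two balls differ in a set of volume at most
`2 |c| / μ * ω (n - 1)`, so the average moves by at most `2 L_y ω (n - 1) |c| / (μ ω n)`.
Walking from `z` to `x` one coordinate at a time and applying Cauchy–Schwarz costs `√n ‖x - z‖`,
and `2 ω (n - 1) √n ≤ n ω n` follows from the log-convexity of `Γ`.
-/

lemma Real.Gamma_add_half_le_mul_sqrt {x : ℝ} (hx : 0 < x) :
    Gamma (x + 1 / 2) ≤ Gamma x * √x := by
  have hΓ := Gamma_pos_of_pos hx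
  have h := Gamma_mul_add_mul_le_rpow_Gamma_mul_rpow_Gamma hx (by linarith : 0 < x + 1)
    (by norm_num : (0 : ℝ) < 1 / 2) (by norm_num : (0 : ℝ) < 1 / 2) (by norm_num)
  calc Gamma (x + 1 / 2) = Gamma (1 / 2 * x + 1 / 2 * (x + 1)) := by ring_nf
    _ ≤ Gamma x ^ (1 / 2 : ℝ) * Gamma (x + 1) ^ (1 / 2 : ℝ) := h
    _ = Gamma x * √x := by
      rw [Gamma_add_one hx.ne', mul_rpow hx.le hΓ.le, sqrt_eq_rpow, mul_left_comm,
        ← rpow_add hΓ]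
      norm_num
      ring

lemma volume_real_unitBall (n : ℕ) :
    volume.real (closedBall (0 : E n) 1) = √π ^ n / Gamma (n / 2 + 1) := by
  rcases n.eq_zero_or_pos with rfl | hn
  · simp [volume_euclideanSpace_eq_dirac, measureReal_def]
  · have : Nonempty (Fin n) := ⟨⟨0, hn⟩⟩
    rw [measureReal_def, EuclideanSpace.volume_closedBall, Fintype.card_fin, ofReal_one, one_pow,
      one_mul, toReal_ofReal (by positivity)]

lemma two_mul_volume_real_unitBall_mul_sqrt_le (m : ℕ) :
    2 * volume.real (closedBall (0 : E m) 1) * √(m + 1)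
      ≤ (m + 1) * volume.real (closedBall (0 : E (m + 1)) 1) := by
  rw [volume_real_unitBall, volume_real_unitBall]
  rcases m.eq_zero_or_pos with rfl | hm
  · have : Gamma (3 / 2) = √π / 2 := by
      rw [show (3 / 2 : ℝ) = 1 / 2 + 1 by norm_num, Gamma_add_one (by norm_num),
        Gamma_one_half_eq]
      ring
    norm_num [this, div_div_cancel₀ (sqrt_pos.2 pi_pos).ne']
  · set x : ℝ := m / 2 + 1 with hx_def
    have hx : 0 < x := by positivity
    have hΓ : Gamma (((m + 1 : ℕ) : ℝ) / 2 + 1) ≤ Gamma x * √x := by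
      convert Gamma_add_half_le_mul_sqrt hx using 2; push_cast; ring
    have hsqrt : 2 * √(m + 1) * √x ≤ (m + 1) * √π := by
      have hm' : (1 : ℝ) ≤ m := by exact_mod_cast hm
      have hl : 2 * √(m + 1) * √x = √(4 * (m + 1) * x) := by
        rw [sqrt_mul (by positivity), sqrt_mul (by positivity), show (4 : ℝ) = 2 ^ 2 by norm_num,
          sqrt_sq (by norm_num)]
      have hr : (m + 1) * √π = √((m + 1) ^ 2 * π) := by
        rw [sqrt_mul (by positivity), sqrt_sq (by positivity)]
      rw [hl, hr]
      refine sqrt_le_sqrt ?_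
      nlinarith [mul_le_mul_of_nonneg_left pi_gt_three.le (sq_nonneg ((m : ℝ) + 1))]
    have hΓ0 := Gamma_pos_of_pos hx
    have hΓ1 := Gamma_pos_of_pos (by positivity : (0 : ℝ) < ((m + 1 : ℕ) : ℝ) / 2 + 1)
    rw [show 2 * (√π ^ m / Gamma x) * √(m + 1) = 2 * √π ^ m * √(m + 1) / Gamma x by ring,
      mul_div_assoc', div_le_div_iff₀ hΓ0 hΓ1]
    calc 2 * √π ^ m * √(m + 1) * Gamma (((m + 1 : ℕ) : ℝ) / 2 + 1)
        ≤ 2 * √π ^ m * √(m + 1) * (Gamma x * √x) := by gcongr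
      _ = √π ^ m * Gamma x * (2 * √(m + 1) * √x) := by ring
      _ ≤ √π ^ m * Gamma x * ((m + 1) * √π) := by gcongr
      _ = _ := by ring

lemma Real.volume_setOf_sq_le_diff_le (a δ r : ℝ) :
    volume ({t : ℝ | (t - a) ^ 2 ≤ r} \ {t | (t - (a + δ)) ^ 2 ≤ r}) ≤ ENNReal.ofReal |δ| := by
  rcases lt_or_ge r 0 with hr | hr
  · have : {t : ℝ | (t - a) ^ 2 ≤ r} = ∅ :=
      eq_empty_of_forall_notMem fun t ht => by nlinarith [sq_nonneg (t - a), mem_ofPred.1 ht]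
    simp [this]
  set s := √r
  have hsub : {t : ℝ | (t - a) ^ 2 ≤ r} \ {t | (t - (a + δ)) ^ 2 ≤ r}
      ⊆ Ico (a - s) (a - s + δ) ∪ Ioc (a + s + δ) (a + s) := by
    rintro t ⟨h₁, h₂⟩
    simp only [mem_ofPred_eq, Real.sq_le hr] at h₁ h₂
    rcases lt_or_ge t (a - s + δ) with h | h
    · exact Or.inl ⟨by linarith, h⟩
    · exact Or.inr ⟨lt_of_not_ge fun h' => h₂ ⟨by linarith, by linarith⟩, by linarith⟩
  calc _ ≤ volume (Ico (a - s) (a - s + δ) ∪ Ioc (a + s + δ) (a + s)) := measure_mono hsub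
    _ ≤ volume (Ico (a - s) (a - s + δ)) + volume (Ioc (a + s + δ) (a + s)) :=
      measure_union_le _ _
    _ = ENNReal.ofReal δ + ENNReal.ofReal (-δ) := by
      rw [Real.volume_Ico, Real.volume_Ioc]; ring_nf
    _ = ENNReal.ofReal |δ| := by
      rcases le_total 0 δ with h | h
      · simp [abs_of_nonneg h, ofReal_of_nonpos (neg_nonpos.2 h)]
      · simp [abs_of_nonpos h, ofReal_of_nonpos h]

lemma MeasureTheory.Measure.prod_apply_le_mul_of_slice_le {α β : Type*} [MeasurableSpace α]
    [MeasurableSpace β] {μ : Measure α} {ν : Measure β} [SFinite μ] [SFinite ν]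
    {T : Set (α × β)} (hT : MeasurableSet T) {W : Set β} (hW : MeasurableSet W) {c : ℝ≥0∞}
    (hslice : ∀ w, μ ((·, w) ⁻¹' T) ≤ W.indicator (fun _ => c) w) :
    μ.prod ν T ≤ c * ν W := by
  rw [Measure.prod_apply_symm hT, ← lintegral_indicator_const hW]
  exact lintegral_mono hslice

def coordSplit {m : ℕ} (k : Fin (m + 1)) : E (m + 1) ≃ᵐ ℝ × E m :=
  (MeasurableEquiv.toLp 2 _).symm.trans <|
    (MeasurableEquiv.piFinSuccAbove (fun _ => ℝ) k).trans <|
      MeasurableEquiv.prodCongr (MeasurableEquiv.refl ℝ) (MeasurableEquiv.toLp 2 _)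

lemma coordSplit_apply {m : ℕ} (k : Fin (m + 1)) (s : E (m + 1)) :
    coordSplit k s = (s k, WithLp.toLp 2 fun j => s (k.succAbove j)) :=
  rfl

lemma measurePreserving_coordSplit {m : ℕ} (k : Fin (m + 1)) :
    MeasurePreserving (coordSplit k) volume volume :=
  (EuclideanSpace.volume_preserving_symm_measurableEquiv_toLp _).trans <|
    (volume_preserving_piFinSuccAbove (fun _ => ℝ) k).trans <|
      (MeasurePreserving.id volume).prod (PiLp.volume_preserving_toLp _)

lemma dist_sq_eq_coordSplit {m : ℕ} (k : Fin (m + 1)) (s c : E (m + 1)) :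
    dist s c ^ 2 = (s k - c k) ^ 2 + dist (coordSplit k s).2 (coordSplit k c).2 ^ 2 := by
  simp only [EuclideanSpace.dist_eq, coordSplit_apply, Real.dist_eq, sq_abs,
    sq_sqrt (Finset.sum_nonneg fun _ _ => sq_nonneg _)]
  exact Fin.sum_univ_succAbove _ k

lemma volume_real_closedBall_diff_closedBall_add_single_le {m : ℕ} (k : Fin (m + 1))
    (p : E (m + 1)) (δ : ℝ) :
    volume.real (closedBall p 1 \ closedBall (p + δ • EuclideanSpace.single k 1) 1)
      ≤ |δ| * volume.real (closedBall (0 : E m) 1) := by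
  set q := (coordSplit k p).2
  set T : Set (ℝ × E m) := {x | (x.1 - p k) ^ 2 ≤ 1 - dist x.2 q ^ 2}
    \ {x | (x.1 - (p k + δ)) ^ 2 ≤ 1 - dist x.2 q ^ 2}
  have hT : MeasurableSet T :=
    (measurableSet_le (by fun_prop) (by fun_prop)).diff
      (measurableSet_le (by fun_prop) (by fun_prop))
  have hpre : coordSplit k ⁻¹' T
      = closedBall p 1 \ closedBall (p + δ • EuclideanSpace.single k 1) 1 := by
    ext s
    have hq : (coordSplit k (p + δ • EuclideanSpace.single k 1)).2 = q := by
      ext j; simp [coordSplit_apply, q]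
    have hk : (p + δ • EuclideanSpace.single k 1 : E (m + 1)) k = p k + δ := by simp
    simp only [mem_preimage, Set.mem_sdiff, mem_ofPred_eq, mem_closedBall, T,
      ← sq_le_one_iff₀ dist_nonneg, dist_sq_eq_coordSplit k s, hq, hk, le_sub_iff_add_le]
    exact Iff.rfl
  have hvol : volume (coordSplit k ⁻¹' T)
      ≤ ENNReal.ofReal |δ| * volume (closedBall (0 : E m) 1) := by
    rw [(measurePreserving_coordSplit k).measure_preimage hT.nullMeasurableSet,
      Measure.volume_eq_prod, ← Measure.addHaar_closedBall_center volume q]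
    refine Measure.prod_apply_le_mul_of_slice_le hT measurableSet_closedBall fun w => ?_
    by_cases hw : w ∈ closedBall q 1
    · rw [indicator_of_mem hw]
      exact Real.volume_setOf_sq_le_diff_le (p k) δ (1 - dist w q ^ 2)
    · rw [indicator_of_notMem hw, nonpos_iff_eq_zero]
      refine measure_mono_null (fun t ht => ?_) measure_empty
      have hwq : 1 < dist w q := not_le.1 hw
      have ht₁ : (t - p k) ^ 2 ≤ 1 - dist w q ^ 2 := ht.1
      nlinarith [sq_nonneg (t - p k)]
  rw [← hpre, measureReal_def, measureReal_def, ← toReal_ofReal (abs_nonneg δ), ← toReal_mul]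
  exact toReal_mono (mul_ne_top ofReal_ne_top measure_closedBall_lt_top.ne) hvol

lemma EuclideanSpace.dist_le_of_dist_add_single_le {ι : Type*} [Fintype ι] [DecidableEq ι]
    {α : Type*} [PseudoMetricSpace α] {f : EuclideanSpace ℝ ι → α} {K : ℝ} (hK : 0 ≤ K)
    (hf : ∀ p k (c : ℝ), dist (f (p + c • EuclideanSpace.single k 1)) (f p) ≤ K * |c|)
    (x z : EuclideanSpace ℝ ι) :
    dist (f x) (f z) ≤ K * √(Fintype.card ι) * dist x z := by
  set d : ι → ℝ := fun k => x k - z k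
  have hpath : ∀ s : Finset ι,
      dist (f (z + ∑ k ∈ s, d k • EuclideanSpace.single k 1)) (f z) ≤ K * ∑ k ∈ s, |d k| := by
    intro s
    induction s using Finset.induction_on with
    | empty => simp
    | insert k s hk ih =>
      rw [Finset.sum_insert hk, Finset.sum_insert hk, ← add_assoc, add_right_comm, mul_add]
      exact (dist_triangle _ _ _).trans (add_le_add (hf _ k _) ih)
  have hx : z + ∑ k, d k • EuclideanSpace.single k 1 = x := by
    have h := (EuclideanSpace.basisFun ι ℝ).sum_repr (x - z)
    simp only [EuclideanSpace.basisFun_repr, PiLp.sub_apply, EuclideanSpace.basisFun_apply] at h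
    rw [h, add_sub_cancel]
  have hsum : ∑ k, |d k| ≤ √(Fintype.card ι) * dist x z := by
    simpa [EuclideanSpace.dist_eq, Real.dist_eq, d] using
      Real.sum_mul_le_sqrt_mul_sqrt Finset.univ (fun _ => 1) fun k => |d k|
  calc dist (f x) (f z) ≤ K * ∑ k, |d k| := hx ▸ hpath Finset.univ
    _ ≤ K * (√(Fintype.card ι) * dist x z) := by gcongr
    _ = _ := by ring

instance isProbabilityMeasure_uniformBall (n : ℕ) : IsProbabilityMeasure (uniformBall n) := by
  constructor
  rw [uniformBall, Measure.smul_apply, Measure.restrict_apply_univ, smul_eq_mul]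
  exact ENNReal.inv_mul_cancel (measure_closedBall_pos volume 0 one_pos).ne'
    measure_closedBall_lt_top.ne

lemma uniformBall_absolutelyContinuous (n : ℕ) : uniformBall n ≪ volume :=
  Measure.smul_absolutelyContinuous.trans Measure.restrict_le_self.absolutelyContinuous

section UniformBall

variable {F : Type*} [NormedAddCommGroup F]

lemma Continuous.integrable_uniformBall {n : ℕ} {f : E n → F} (hf : Continuous f) :
    Integrable f (uniformBall n) :=
  (hf.continuousOn.integrableOn_compact (isCompact_closedBall 0 1)).smul_measure
    (ENNReal.inv_ne_top.2 (measure_closedBall_pos volume 0 one_pos).ne')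

variable [NormedSpace ℝ F]

lemma integral_uniformBall {n : ℕ} (f : E n → F) :
    ∫ u, f u ∂uniformBall n
      = (volume.real (closedBall (0 : E n) 1))⁻¹ • ∫ u in closedBall 0 1, f u := by
  rw [uniformBall, integral_smul_measure, toReal_inv, measureReal_def]

end UniformBall

section Smoothing

variable {dx dy : ℕ} {y : E dx → E dy} {L : ℝ≥0} {μ : ℝ}

lemma hasFDerivAt_ymu (hL : LipschitzWith L y) (hμ : μ ≠ 0) (x : E dx) :
    HasFDerivAt (ymu y μ) (∫ u, fderiv ℝ y (x + μ • u) ∂uniformBall dx) x := by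
  have hdiff : ∀ᵐ u ∂uniformBall dx, DifferentiableAt ℝ y (x + μ • u) :=
    uniformBall_absolutelyContinuous dx <|
      ((measurePreserving_add_left volume x).quasiMeasurePreserving.comp
        (Measure.quasiMeasurePreserving_smul volume hμ)).ae hL.ae_differentiableAt
  refine (hasFDerivAt_integral_of_dominated_loc_of_lip (bound := fun _ => (L : ℝ)) univ_mem
    (Eventually.of_forall fun x' => ?_) ?_ ?_ (Eventually.of_forall fun u => ?_)
    (integrable_const _) ?_).2
  · exact (hL.continuous.comp (by fun_prop)).aestronglyMeasurable
  · exact (hL.continuous.comp (by fun_prop)).integrable_uniformBall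
  · exact ((measurable_fderiv ℝ y).comp (by fun_prop)).aestronglyMeasurable
  · refine (LipschitzWith.of_dist_le_mul fun a b => ?_).lipschitzOnWith
    simpa using hL.dist_le_mul (a + μ • u) (b + μ • u)
  · filter_upwards [hdiff] with u hu
    exact (hasFDerivAt_comp_add_right (μ • u)).2 hu.hasFDerivAt

lemma fderiv_ymu_apply (hL : LipschitzWith L y) (hμ : μ ≠ 0) (x v : E dx) :
    fderiv ℝ (ymu y μ) x v = ∫ u, fderiv ℝ y (x + μ • u) v ∂uniformBall dx := by
  rw [(hasFDerivAt_ymu hL hμ x).fderiv, ContinuousLinearMap.integral_apply]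
  exact Integrable.of_bound ((measurable_fderiv ℝ y).comp (by fun_prop)).aestronglyMeasurable L
    (Eventually.of_forall fun _ => norm_fderiv_le_of_lipschitz ℝ hL)

end Smoothing

section BallAverage

variable {F : Type*} [NormedAddCommGroup F] [NormedSpace ℝ F]

lemma norm_setIntegral_sub_setIntegral_le {α : Type*} [MeasurableSpace α] {ν : Measure α}
    {h : α → F} {s t : Set α} {C : ℝ} (hs : MeasurableSet s) (ht : MeasurableSet t)
    (hsν : ν s ≠ ∞) (htν : ν t ≠ ∞) (hh : AEStronglyMeasurable h ν) (hC : ∀ x, ‖h x‖ ≤ C) :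
    ‖∫ x in s, h x ∂ν - ∫ x in t, h x ∂ν‖ ≤ C * (ν.real (s \ t) + ν.real (t \ s)) := by
  have hint : ∀ r, ν r ≠ ∞ → IntegrableOn h r ν := fun r hr =>
    Measure.integrableOn_of_bounded hr hh (Eventually.of_forall hC)
  have hfin : ∀ r r', ν r ≠ ∞ → ν (r \ r') < ∞ := fun r r' hr =>
    (measure_mono sdiff_subset).trans_lt hr.lt_top
  rw [← integral_inter_add_sdiff ht (hint s hsν), ← integral_inter_add_sdiff hs (hint t htν),
    inter_comm t s, add_sub_add_left_eq_sub]
  calc _ ≤ ‖∫ x in s \ t, h x ∂ν‖ + ‖∫ x in t \ s, h x ∂ν‖ := norm_sub_le _ _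
    _ ≤ C * ν.real (s \ t) + C * ν.real (t \ s) :=
      add_le_add (norm_setIntegral_le_of_norm_le_const (hfin s t hsν) fun x _ => hC x)
        (norm_setIntegral_le_of_norm_le_const (hfin t s htν) fun x _ => hC x)
    _ = _ := by ring

lemma norm_setIntegral_unitBall_add_single_sub_le {m : ℕ} {h : E (m + 1) → F} {C : ℝ}
    (hh : AEStronglyMeasurable h volume) (hC : ∀ w, ‖h w‖ ≤ C) (k : Fin (m + 1)) (t : ℝ) :
    ‖(∫ u in closedBall 0 1, h (u + t • EuclideanSpace.single k 1))
        - ∫ u in closedBall 0 1, h u‖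
      ≤ 2 * C * volume.real (closedBall (0 : E m) 1) * |t| := by
  set a : E (m + 1) := t • EuclideanSpace.single k 1
  have hC0 : 0 ≤ C := (norm_nonneg _).trans (hC 0)
  have htrans : ∫ u in closedBall 0 1, h (u + a) = ∫ v in closedBall a 1, h v := by
    have := (measurePreserving_add_right volume a).setIntegral_preimage_emb
      (measurableEmbedding_addRight a) h (closedBall a 1)
    rwa [preimage_add_right_closedBall, sub_self] at this
  have hout : volume.real (closedBall a 1 \ closedBall 0 1)
      ≤ |t| * volume.real (closedBall (0 : E m) 1) := by
    simpa [a] using volume_real_closedBall_diff_closedBall_add_single_le k a (-t)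
  have hin : volume.real (closedBall 0 1 \ closedBall a 1)
      ≤ |t| * volume.real (closedBall (0 : E m) 1) := by
    simpa [a] using volume_real_closedBall_diff_closedBall_add_single_le k 0 t
  rw [htrans]
  calc _ ≤ C * (volume.real (closedBall a 1 \ closedBall 0 1)
          + volume.real (closedBall 0 1 \ closedBall a 1)) :=
        norm_setIntegral_sub_setIntegral_le measurableSet_closedBall measurableSet_closedBall
          measure_closedBall_lt_top.ne measure_closedBall_lt_top.ne hh hC
    _ ≤ C * (|t| * volume.real (closedBall (0 : E m) 1)
          + |t| * volume.real (closedBall (0 : E m) 1)) := by gcongr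
    _ = _ := by ring

lemma norm_ballAverage_add_single_sub_le {m : ℕ} {g : E (m + 1) → F} {C μ : ℝ}
    (hg : AEStronglyMeasurable g volume) (hC : ∀ w, ‖g w‖ ≤ C) (hμ : 0 < μ) (p : E (m + 1))
    (k : Fin (m + 1)) (c : ℝ) :
    ‖∫ u, g (p + c • EuclideanSpace.single k 1 + μ • u) ∂uniformBall (m + 1)
        - ∫ u, g (p + μ • u) ∂uniformBall (m + 1)‖
      ≤ 2 * C * volume.real (closedBall (0 : E m) 1)
          / (μ * volume.real (closedBall (0 : E (m + 1)) 1)) * |c| := by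
  have hh : AEStronglyMeasurable (fun u => g (p + μ • u)) volume :=
    hg.comp_quasiMeasurePreserving <|
      (measurePreserving_add_left volume p).quasiMeasurePreserving.comp
        (Measure.quasiMeasurePreserving_smul volume hμ.ne')
  have hshift : ∀ u : E (m + 1), p + c • EuclideanSpace.single k 1 + μ • u
      = p + μ • (u + (c / μ) • EuclideanSpace.single k 1) := fun u => by
    rw [smul_add, smul_smul, mul_div_cancel₀ _ hμ.ne']; abel
  simp_rw [hshift, integral_uniformBall, ← smul_sub, norm_smul, norm_inv, Real.norm_eq_abs,
    abs_of_nonneg measureReal_nonneg]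
  calc _ ≤ (volume.real (closedBall (0 : E (m + 1)) 1))⁻¹
        * (2 * C * volume.real (closedBall (0 : E m) 1) * |c / μ|) := by
        gcongr
        exact norm_setIntegral_unitBall_add_single_sub_le hh (fun _ => hC _) k _
    _ = _ := by rw [abs_div, abs_of_pos hμ]; ring

lemma norm_ballAverage_sub_le {n : ℕ} {g : E n → F} {C μ : ℝ}
    (hg : AEStronglyMeasurable g volume) (hC : ∀ w, ‖g w‖ ≤ C) (hμ : 0 < μ) (x z : E n) :
    ‖∫ u, g (x + μ • u) ∂uniformBall n - ∫ u, g (z + μ • u) ∂uniformBall n‖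
      ≤ n * C / μ * ‖x - z‖ := by
  cases n with
  | zero => simp [Subsingleton.elim x z]
  | succ m =>
    have hC0 : 0 ≤ C := (norm_nonneg _).trans (hC 0)
    have hV : 0 < volume.real (closedBall (0 : E (m + 1)) 1) :=
      toReal_pos (measure_closedBall_pos volume 0 one_pos).ne' measure_closedBall_lt_top.ne
    have hlip := EuclideanSpace.dist_le_of_dist_add_single_le
      (f := fun p => ∫ u, g (p + μ • u) ∂uniformBall (m + 1)) (by positivity)
      (fun p k c => (dist_eq_norm _ _).trans_le
        (norm_ballAverage_add_single_sub_le hg hC hμ p k c)) x z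
    rw [← dist_eq_norm, ← dist_eq_norm]
    refine hlip.trans (mul_le_mul_of_nonneg_right ?_ dist_nonneg)
    calc _ = C / μ * (2 * volume.real (closedBall (0 : E m) 1) * √(m + 1)
          / volume.real (closedBall (0 : E (m + 1)) 1)) := by
          rw [Fintype.card_fin]; push_cast; ring
      _ ≤ C / μ * (m + 1) := by
        gcongr
        rw [div_le_iff₀ hV]
        exact two_mul_volume_real_unitBall_mul_sqrt_le m
      _ = _ := by push_cast; ring

end BallAverage

/-- every partial derivative `∂(y_μ)_i/∂x_j` is `(d_x L_y / μ)`-Lipschitz. -/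
theorem stmt5 (dx dy : ℕ) (ystar : E dx → E dy) (Ly : ℝ≥0)
    (hLip : LipschitzWith Ly ystar) (μ : ℝ) (hμ : 0 < μ) :
    ∀ (i : Fin dy) (j : Fin dx) (x z : E dx),
      |fderiv ℝ (ymu ystar μ) x (EuclideanSpace.single j (1 : ℝ)) i
        - fderiv ℝ (ymu ystar μ) z (EuclideanSpace.single j (1 : ℝ)) i|
      ≤ (dx : ℝ) * (Ly : ℝ) / μ * ‖x - z‖ := by
  intro i j x z
  have hmeas :
      AEStronglyMeasurable (fun w => fderiv ℝ ystar w (EuclideanSpace.single j 1)) volume :=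
    (measurable_fderiv_apply_const ℝ ystar _).aestronglyMeasurable
  have hbound : ∀ w, ‖fderiv ℝ ystar w (EuclideanSpace.single j 1)‖ ≤ Ly := fun w => by
    simpa using (fderiv ℝ ystar w).le_of_opNorm_le (norm_fderiv_le_of_lipschitz ℝ hLip)
      (EuclideanSpace.single j (1 : ℝ))
  rw [fderiv_ymu_apply hLip hμ.ne', fderiv_ymu_apply hLip hμ.ne', ← PiLp.sub_apply,
    ← Real.norm_eq_abs]
  exact (PiLp.norm_apply_le _ i).trans (norm_ballAverage_sub_le hmeas hbound hμ x z)
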